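/- Let U be an open subset of ℝ^m and g : U → ℝ^d a continuously differentiable injection whose derivative g'(u) has full rank (rank m) at every u ∈ U, and which is an open map onto its image. If F is a compact subset of g(U), then both the infimum and supremum over distinct points y, z ∈ F of ‖g⁻¹(z) − g⁻¹(y)‖ / ‖z − y‖ are finite and strictly positive; i.e., g⁻¹ is bi-Lipschitz on F. -/
import Mathlib


open MeasureTheory Set

section Aux

variable {E F : Type*} [NormedAddCommGroup E] [NormedSpace ℝ E] [FiniteDimensional ℝ E]
  [NormedAddCommGroup F] [NormedSpace ℝ F]

/-- Local bi-Lipschitz bounds from a strict derivative with injective derivative. -/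
lemma loc_bilip_aux {g : E → F} {g' : E →L[ℝ] F} {u : E}
    (hstrict : HasStrictFDerivAt g g' u) (hinj : Function.Injective g') {U : Set E}
    (hU : IsOpen U) (huU : u ∈ U) :
    ∃ r > 0, ∃ a > 0, ∃ b > 0, Metric.ball u r ⊆ U ∧
      ∀ x ∈ Metric.ball u r, ∀ y ∈ Metric.ball u r,
        a * ‖x - y‖ ≤ ‖g x - g y‖ ∧ ‖g x - g y‖ ≤ b * ‖x - y‖ := by
  obtain ⟨L, hL0, hLa⟩ := LinearMap.exists_antilipschitzWith (g' : E →ₗ[ℝ] F)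
    (LinearMap.ker_eq_bot.2 hinj)
  have hL0' : (0:ℝ) < (L:ℝ) := hL0
  set cnn : NNReal := L⁻¹ / 2 with hcnn
  have hc : 0 < cnn := by positivity
  obtain ⟨s, hs, happ⟩ := hstrict.approximates_deriv_on_nhds (Or.inr hc)
  obtain ⟨r, hr0, hrs⟩ := Metric.mem_nhds_iff.1 (Filter.inter_mem hs (hU.mem_nhds huU))
  have hsub : Metric.ball u r ⊆ U := fun x hx => (hrs hx).2
  have hcR : (cnn : ℝ) = (L:ℝ)⁻¹ / 2 := by simp [hcnn]
  refine ⟨r, hr0, (L:ℝ)⁻¹ / 2, by positivity, ‖g'‖ + (L:ℝ)⁻¹/2, by positivity, hsub, ?_⟩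
  intro x hx y hy
  have h1 : ‖g x - g y - g' (x - y)‖ ≤ (cnn : ℝ) * ‖x - y‖ :=
    happ x (hrs hx).1 y (hrs hy).1
  have h2 : ‖x - y‖ ≤ (L:ℝ) * ‖g' (x - y)‖ := by
    have := hLa.le_mul_dist (x - y) 0
    simpa [dist_eq_norm] using this
  have h3 : ‖g' (x - y)‖ ≤ ‖g x - g y‖ + ‖g x - g y - g' (x - y)‖ := by
    have := norm_sub_le (g x - g y) (g x - g y - g' (x - y))
    simpa using this
  have h4 : ‖g x - g y‖ ≤ ‖g' (x - y)‖ + ‖g x - g y - g' (x - y)‖ := by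
    have := norm_add_le (g' (x - y)) (g x - g y - g' (x - y))
    simpa using this
  have h5 : ‖g' (x - y)‖ ≤ ‖g'‖ * ‖x - y‖ := g'.le_opNorm _
  have h6 : (0:ℝ) ≤ ‖x - y‖ := norm_nonneg _
  rw [hcR] at h1
  constructor
  · have h2' : (L:ℝ)⁻¹ * ‖x - y‖ ≤ ‖g' (x - y)‖ := by
      rw [inv_mul_le_iff₀ hL0']; exact h2
    linarith
  · nlinarith

end Aux

/-- If `g : ℝ^m → ℝ^d` is `C¹` and injective on an open set `U`, with injective (full rank)
derivative at every point of `U`, and is an open map onto its image in `g '' U`, then for any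
compact `F ⊆ g '' U`, the inverse of `g` is bi-Lipschitz on `F`: there are constants
`0 < c ≤ C < ∞` such that `c ≤ ‖g⁻¹ z − g⁻¹ y‖ / ‖z − y‖ ≤ C` for distinct `y, z ∈ F`. -/
theorem stmt0 (m d : ℕ) (hmd : m ≤ d) (U : Set (EuclideanSpace ℝ (Fin m)))
    (hU : IsOpen U) (g : EuclideanSpace ℝ (Fin m) → EuclideanSpace ℝ (Fin d))
    (g' : EuclideanSpace ℝ (Fin m) → (EuclideanSpace ℝ (Fin m) →L[ℝ] EuclideanSpace ℝ (Fin d)))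
    (hderiv : ∀ u ∈ U, HasFDerivAt g (g' u) u)
    (hcont : ContinuousOn (fun u => (g' u : EuclideanSpace ℝ (Fin m) →L[ℝ] EuclideanSpace ℝ (Fin d))) U)
    (hinj : InjOn g U)
    (hrank : ∀ u ∈ U, Function.Injective (g' u))
    (hopen : ∀ V ⊆ U, IsOpen V → ∃ W : Set (EuclideanSpace ℝ (Fin d)),
      IsOpen W ∧ g '' V = W ∩ g '' U)
    (F : Set (EuclideanSpace ℝ (Fin d))) (hF : IsCompact F) (hFU : F ⊆ g '' U) :
    ∃ c C : ℝ, 0 < c ∧ 0 < C ∧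
      ∀ u ∈ U, ∀ v ∈ U, g u ∈ F → g v ∈ F → u ≠ v →
        c ≤ ‖u - v‖ / ‖g u - g v‖ ∧ ‖u - v‖ / ‖g u - g v‖ ≤ C := by
  classical
  set ginv := Function.invFunOn g U with hginvdef
  have hginvg : ∀ u ∈ U, ginv (g u) = u := fun u hu =>
    hinj (Function.invFunOn_apply_mem hu) hu (Function.invFunOn_apply_eq hu)
  have hgU : ContinuousOn g U := fun u hu => (hderiv u hu).continuousAt.continuousWithinAt
  have hcontinv : ContinuousOn ginv (g '' U) := by
    rw [continuousOn_iff']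
    intro t ht
    obtain ⟨W, hW, hgW⟩ := hopen (t ∩ U) inter_subset_right (ht.inter hU)
    refine ⟨W, hW, ?_⟩
    rw [← hgW]
    ext y
    constructor
    · rintro ⟨hyt, u, hu, rfl⟩
      exact ⟨u, ⟨by rwa [mem_preimage, hginvg u hu] at hyt, hu⟩, rfl⟩
    · rintro ⟨u, ⟨hut, huU⟩, rfl⟩
      exact ⟨by rw [mem_preimage, hginvg u huU]; exact hut, ⟨u, huU, rfl⟩⟩
  set K := ginv '' F with hKdef
  have hKU : K ⊆ U := by
    rintro x ⟨y, hyF, rfl⟩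
    exact Function.invFunOn_mem (hFU hyF)
  have hK : IsCompact K := hF.image_of_continuousOn (hcontinv.mono hFU)
  have hmemK : ∀ u ∈ U, g u ∈ F → u ∈ K := fun u hu hgu => ⟨g u, hgu, hginvg u hu⟩
  by_cases hKne : K.Nonempty
  swap
  · exact ⟨1, 1, one_pos, one_pos, fun u hu v hv hgu hgv hne =>
      absurd ⟨u, hmemK u hu hgu⟩ hKne⟩
  have key : ∀ x ∈ K, ∃ r > 0, ∃ a > 0, ∃ b > 0, Metric.ball x r ⊆ U ∧
      ∀ p ∈ Metric.ball x r, ∀ q ∈ Metric.ball x r,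
        a * ‖p - q‖ ≤ ‖g p - g q‖ ∧ ‖g p - g q‖ ≤ b * ‖p - q‖ := by
    intro x hx
    have hxU := hKU hx
    have hstrict : HasStrictFDerivAt g (g' x) x :=
      hasStrictFDerivAt_of_hasFDerivAt_of_continuousAt
        (Filter.eventually_of_mem (hU.mem_nhds hxU) hderiv)
        (hcont.continuousAt (hU.mem_nhds hxU))
    exact loc_bilip_aux hstrict (hrank x hxU) hU hxU
  choose! r hr a ha b hb hball hbil using key
  obtain ⟨t, htcov⟩ := hK.elim_nhds_subcover' (fun x hx => Metric.ball x (r x / 2))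
      (fun x hx => Metric.ball_mem_nhds _ (half_pos (hr x hx)))
  have htne : t.Nonempty := by
    obtain ⟨x0, hx0⟩ := hKne
    have h := htcov hx0
    simp only [Set.mem_iUnion] at h
    obtain ⟨i, hi, -⟩ := h
    exact ⟨i, hi⟩
  set δ : ℝ := t.inf' htne (fun x => r x / 2) with hδdef
  have hδ0 : 0 < δ := by
    rw [hδdef, Finset.lt_inf'_iff]
    exact fun i hi => half_pos (hr i i.2)
  set a₀ : ℝ := t.inf' htne (fun x => a x) with ha₀def
  set b₀ : ℝ := t.sup' htne (fun x => b x) with hb₀def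
  have ha₀0 : 0 < a₀ := by
    rw [ha₀def, Finset.lt_inf'_iff]
    exact fun i hi => ha i i.2
  have hb₀0 : 0 < b₀ := by
    obtain ⟨i, hi⟩ := htne
    exact lt_of_lt_of_le (hb i i.2) (Finset.le_sup' (fun x : ↥K => b ↑x) hi)
  have hnear : ∀ x ∈ K, ∀ y ∈ K, ‖x - y‖ < δ →
      a₀ * ‖x - y‖ ≤ ‖g x - g y‖ ∧ ‖g x - g y‖ ≤ b₀ * ‖x - y‖ := by
    intro x hx y hy hxy
    have h := htcov hx
    simp only [Set.mem_iUnion] at h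
    obtain ⟨i, hi, hxi⟩ := h
    have hδi : δ ≤ r i / 2 := Finset.inf'_le _ hi
    rw [Metric.mem_ball] at hxi
    have hx' : x ∈ Metric.ball (i : EuclideanSpace ℝ (Fin m)) (r i) := by
      rw [Metric.mem_ball]
      linarith [hr i i.2]
    have hy' : y ∈ Metric.ball (i : EuclideanSpace ℝ (Fin m)) (r i) := by
      rw [Metric.mem_ball]
      have h1 : dist y x = ‖x - y‖ := by rw [dist_comm, dist_eq_norm]
      calc dist y (i : EuclideanSpace ℝ (Fin m)) ≤ dist y x + dist x i := dist_triangle _ _ _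
        _ < δ + r i / 2 := by rw [h1]; exact add_lt_add hxy hxi
        _ ≤ r i := by linarith
    obtain ⟨hl, hu2⟩ := hbil i i.2 x hx' y hy'
    constructor
    · exact le_trans (mul_le_mul_of_nonneg_right (Finset.inf'_le _ hi) (norm_nonneg _)) hl
    · exact le_trans hu2 (mul_le_mul_of_nonneg_right (Finset.le_sup' (fun x : ↥K => b ↑x) hi) (norm_nonneg _))
  -- far part
  set S := (K ×ˢ K) ∩ {p : EuclideanSpace ℝ (Fin m) × EuclideanSpace ℝ (Fin m) |
      δ ≤ dist p.1 p.2} with hSdef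
  have hScomp : IsCompact S :=
    (hK.prod hK).inter_right (isClosed_le continuous_const (continuous_fst.dist continuous_snd))
  have hφ : ContinuousOn (fun p : EuclideanSpace ℝ (Fin m) × EuclideanSpace ℝ (Fin m) =>
      ‖g p.1 - g p.2‖) S := by
    apply ContinuousOn.norm
    exact (hgU.comp continuousOn_fst fun p hp => hKU hp.1.1).sub
      (hgU.comp continuousOn_snd fun p hp => hKU hp.1.2)
  have hη : ∃ η > 0, ∀ x ∈ K, ∀ y ∈ K, δ ≤ ‖x - y‖ → η ≤ ‖g x - g y‖ := by
    by_cases hSne : S.Nonempty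
    · obtain ⟨p, hpS, hpmin⟩ := hScomp.exists_isMinOn hSne hφ
      have hp1 : p.1 ∈ K := hpS.1.1
      have hp2 : p.2 ∈ K := hpS.1.2
      have hpne : p.1 ≠ p.2 := by
        intro h
        have := hpS.2
        rw [Set.mem_setOf_eq, h, dist_self] at this
        linarith
      refine ⟨‖g p.1 - g p.2‖, ?_, ?_⟩
      · exact norm_pos_iff.2 (sub_ne_zero.2 fun h => hpne (hinj (hKU hp1) (hKU hp2) h))
      · intro x hx y hy hxy
        exact isMinOn_iff.1 hpmin (x, y)
          ⟨Set.mk_mem_prod hx hy, by rw [Set.mem_setOf_eq, dist_eq_norm]; exact hxy⟩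
    · refine ⟨1, one_pos, fun x hx y hy hxy => absurd ⟨(x, y), Set.mk_mem_prod hx hy,
        by rw [Set.mem_setOf_eq, dist_eq_norm]; exact hxy⟩ hSne⟩
  obtain ⟨η, hη0, hηle⟩ := hη
  obtain ⟨D, hD⟩ := Metric.isBounded_iff.1 hF.isBounded
  obtain ⟨DK, hDK⟩ := Metric.isBounded_iff.1 hK.isBounded
  have hD1 : (0:ℝ) < max D 1 := lt_of_lt_of_le one_pos (le_max_right _ _)
  have hDK0 : 0 ≤ DK := by
    obtain ⟨x0, hx0⟩ := hKne
    exact le_trans dist_nonneg (hDK hx0 hx0)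
  refine ⟨min (1 / b₀) (δ / max D 1), max (1 / a₀) ((DK + 1) / η),
    lt_min (one_div_pos.2 hb₀0) (div_pos hδ0 hD1),
    lt_max_of_lt_left (one_div_pos.2 ha₀0), ?_⟩
  intro u hu v hv hgu hgv hne
  have huK := hmemK u hu hgu
  have hvK := hmemK v hv hgv
  have hgne : g u ≠ g v := fun h => hne (hinj hu hv h)
  have hgpos : 0 < ‖g u - g v‖ := by rw [norm_pos_iff]; exact sub_ne_zero.2 hgne
  have hupos : 0 < ‖u - v‖ := by rw [norm_pos_iff]; exact sub_ne_zero.2 hne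
  by_cases hcase : ‖u - v‖ < δ
  · obtain ⟨hl, hu2⟩ := hnear u huK v hvK hcase
    constructor
    · refine le_trans (min_le_left _ _) ?_
      rw [div_le_div_iff₀ hb₀0 hgpos]
      nlinarith
    · refine le_trans ?_ (le_max_left _ _)
      rw [div_le_div_iff₀ hgpos ha₀0]
      nlinarith
  · push_neg at hcase
    have hηuv : η ≤ ‖g u - g v‖ := hηle u huK v hvK hcase
    have hgD : ‖g u - g v‖ ≤ max D 1 := by
      rw [← dist_eq_norm]
      exact le_trans (hD hgu hgv) (le_max_left _ _)
    have huvDK : ‖u - v‖ ≤ DK + 1 := by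
      rw [← dist_eq_norm]
      linarith [hDK huK hvK]
    constructor
    · exact le_trans (min_le_right _ _) (div_le_div₀ (norm_nonneg _) hcase hgpos hgD)
    · exact le_trans (div_le_div₀ (by linarith) huvDK hη0 hηuv) (le_max_right _ _)
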